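/- For every integer m ≥ 1, consider in the multivariate formal power series ring ℚ⟦x₁,…,x_m⟧ the series F = (Σ_{p=1}^{m} B(x_p)) · Π_{q=1}^{m} B'(x_q), where B(x_p) denotes the substitution of x_p into the univariate power series Σ_{n≥0} bernoulli_n X^n/n! = X/(e^X − 1), and B'(x_q) denotes the substitution of x_q into Σ_{n≥0} bernoulli'_n X^n/n! = X/(1 − e^{−X}). Then the homogeneous component of total degree m of F vanishes. -/

import Mathlib

/-!
With `B = X/(e^X - 1)` and `B' = X e^X/(e^X - 1) = B + X`, multiplying by `e^X - 1` and
differentiating `B (e^X - 1) = X` gives `B B' = B' - X · dB'/dX`, i.e. the `n`-th coefficient of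
`B B'` is `(1 - n)` times that of `B'`. Expanding the `p`-th summand of `F` as
`(B B')(x_p) ∏_{q ≠ p} B'(x_q)`, its coefficient on `x^d` is `(1 - d_p) ∏_q [x^{d_q}] B'`, so the
coefficient of `F` on `x^d` is `(m - |d|) ∏_q [x^{d_q}] B'`, which vanishes when `|d| = m`.
-/

/-- Substitution of the single variable `x_p` into a univariate power series `φ`: the
multivariate power series `φ(x_p)`, whose coefficient on the monomial `x_p^n` is the `n`-th
coefficient of `φ`, and whose coefficient on any monomial involving another variable is `0`. -/
noncomputable def substVar {m : ℕ} (p : Fin m) (φ : PowerSeries ℚ) :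
    MvPowerSeries (Fin m) ℚ :=
  fun d => if d.support ⊆ ({p} : Finset (Fin m)) then PowerSeries.coeff (d p) φ else 0

open PowerSeries

namespace PowerSeries

theorem exp_sub_one_ne_zero (A : Type*) [Ring A] [Algebra ℚ A] [Nontrivial A] :
    exp A - 1 ≠ 0 := by
  intro h
  simpa [coeff_exp] using congrArg (coeff 1) h

section Bernoulli

variable (A : Type*) [CommRing A] [Algebra ℚ A] [IsDomain A]

theorem bernoulli'PowerSeries_eq_add_X :
    bernoulli'PowerSeries A = bernoulliPowerSeries A + X := by
  apply mul_right_cancel₀ (exp_sub_one_ne_zero A)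
  linear_combination bernoulli'PowerSeries_mul_exp_sub_one A -
    bernoulliPowerSeries_mul_exp_sub_one A

theorem bernoulliPowerSeries_mul_bernoulli'PowerSeries :
    bernoulliPowerSeries A * bernoulli'PowerSeries A =
      bernoulli'PowerSeries A - X * d⁄dX A (bernoulli'PowerSeries A) := by
  set B := bernoulliPowerSeries A
  have hB : B * (exp A - 1) = X := bernoulliPowerSeries_mul_exp_sub_one A
  have hB' := bernoulli'PowerSeries_eq_add_X A
  have hDB : d⁄dX A B * (exp A - 1) + B * exp A = 1 := by
    simpa [Derivation.leibniz, derivative_exp, mul_comm, add_comm] using congrArg (d⁄dX A) hB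
  apply mul_right_cancel₀ (exp_sub_one_ne_zero A)
  rw [hB', map_add, derivative_X]
  linear_combination (B - 1) * hB + X * hDB

end Bernoulli

theorem coeff_X_mul_derivative {R : Type*} [CommSemiring R] (f : R⟦X⟧) (n : ℕ) :
    coeff n (X * d⁄dX R f) = n * coeff n f := by
  cases n with
  | zero => simp
  | succ n => rw [coeff_succ_X_mul, coeff_derivative, mul_comm]; push_cast; rfl

end PowerSeries

theorem coeff_bernoulli_mul_bernoulli' (n : ℕ) :
    coeff n ((mk fun n => bernoulli n / (n.factorial : ℚ)) *
        mk fun n => bernoulli' n / (n.factorial : ℚ)) =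
      (1 - n) * coeff n (mk fun n => bernoulli' n / (n.factorial : ℚ)) := by
  have h := congrArg (coeff n) (bernoulliPowerSeries_mul_bernoulli'PowerSeries ℚ)
  simp only [bernoulliPowerSeries, bernoulli'PowerSeries, Algebra.algebraMap_self,
    RingHom.id_apply] at h
  rw [h, map_sub, coeff_X_mul_derivative]
  ring

theorem coeff_substVar {m : ℕ} (p : Fin m) (φ : ℚ⟦X⟧) (e : Fin m →₀ ℕ) :
    MvPowerSeries.coeff e (substVar p φ) =
      if e = Finsupp.single p (e p) then coeff (e p) φ else 0 :=
  if_congr Finsupp.support_subset_singleton rfl rfl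

theorem substVar_eq_subst {m : ℕ} (p : Fin m) (φ : ℚ⟦X⟧) :
    substVar p φ = subst (MvPowerSeries.X p) φ := by
  ext e
  rw [coeff_subst_single, coeff_substVar]

theorem substVar_mul {m : ℕ} (p : Fin m) (φ ψ : ℚ⟦X⟧) :
    substVar p (φ * ψ) = substVar p φ * substVar p ψ := by
  simp only [substVar_eq_subst, subst_mul (HasSubst.X p)]

theorem coeff_prod_substVar {m : ℕ} (φ : Fin m → ℚ⟦X⟧) (d : Fin m →₀ ℕ) :
    MvPowerSeries.coeff d (∏ q, substVar q (φ q)) = ∏ q, coeff (d q) (φ q) := by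
  classical
  rw [MvPowerSeries.coeff_prod, Finset.sum_eq_single_of_mem
    (Finsupp.equivFunOnFinite.symm fun q => Finsupp.single q (d q))]
  · simp [coeff_substVar]
  · simp [Finset.mem_finsuppAntidiag, Finsupp.univ_sum_single]
  · intro l hl hne
    refine Finset.prod_eq_zero_iff.mpr ?_
    by_contra! h
    have hl_single : ∀ q, l q = Finsupp.single q (l q q) := fun q =>
      (ite_ne_right_iff.mp (coeff_substVar q (φ q) (l q) ▸ h q (Finset.mem_univ q))).1
    have hd : ∀ q, d q = l q q := fun q => by
      rw [← (Finset.mem_finsuppAntidiag.mp hl).1, Finsupp.finsetSum_apply]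
      refine Finset.sum_eq_single q (fun i _ hi => ?_) (by simp)
      rw [hl_single i, Finsupp.single_eq_of_ne hi.symm]
    exact hne (Finsupp.ext fun q => by simp [hd q, ← hl_single q])

theorem coeff_substVar_mul_prod_substVar {m : ℕ} (p : Fin m) (ψ φ : ℚ⟦X⟧) (d : Fin m →₀ ℕ) :
    MvPowerSeries.coeff d (substVar p ψ * ∏ q, substVar q φ) =
      coeff (d p) (ψ * φ) * ∏ q ∈ Finset.univ.erase p, coeff (d q) φ := by
  classical
  set φ' := Function.update (fun _ => φ) p (ψ * φ)
  have hφ' : ∀ q ∈ Finset.univ.erase p, φ' q = φ := fun q hq =>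
    Function.update_of_ne (Finset.ne_of_mem_erase hq) _ _
  have hφ'p : φ' p = ψ * φ := Function.update_self _ _ _
  have hprod : substVar p ψ * ∏ q, substVar q φ = ∏ q, substVar q (φ' q) := by
    rw [← Finset.mul_prod_erase _ _ (Finset.mem_univ p), ← Finset.mul_prod_erase _ _
      (Finset.mem_univ p), ← mul_assoc, ← substVar_mul, hφ'p]
    exact congrArg _ (Finset.prod_congr rfl fun q hq => by rw [hφ' q hq])
  rw [hprod, coeff_prod_substVar, ← Finset.mul_prod_erase _ _ (Finset.mem_univ p), hφ'p]
  exact congrArg _ (Finset.prod_congr rfl fun q hq => by rw [hφ' q hq])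

theorem stmt_8_general (m : ℕ) (d : Fin m →₀ ℕ) (hd : (d.sum fun _ e => e) = m) :
    MvPowerSeries.coeff d
        ((∑ p : Fin m, substVar p (PowerSeries.mk fun n => bernoulli n / (n.factorial : ℚ))) *
          ∏ q : Fin m, substVar q (PowerSeries.mk fun n => bernoulli' n / (n.factorial : ℚ)))
      = 0 := by
  have hsum : ∑ p : Fin m, (1 - (d p : ℚ)) = 0 := by
    rw [Finsupp.sum_fintype _ _ fun _ => rfl] at hd
    simp [Finset.sum_sub_distrib, ← Nat.cast_sum, hd]
  set B' := mk fun n => bernoulli' n / (n.factorial : ℚ)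
  calc _ = ∑ p, (1 - (d p : ℚ)) * ∏ q, coeff (d q) B' := by
        rw [Finset.sum_mul, map_sum]
        refine Finset.sum_congr rfl fun p _ => ?_
        rw [coeff_substVar_mul_prod_substVar, coeff_bernoulli_mul_bernoulli', mul_assoc,
          Finset.mul_prod_erase _ (fun q => coeff (d q) B') (Finset.mem_univ p)]
    _ = 0 := by rw [← Finset.sum_mul, hsum, zero_mul]

/-- For every integer `m ≥ 1`, consider in `ℚ⟦x₁,…,x_m⟧` the series
`F = (Σ_{p=1}^{m} B(x_p)) · Π_{q=1}^{m} B'(x_q)`, where `B = Σ bernoulli_n X^n/n! = X/(e^X−1)`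
and `B' = Σ bernoulli'_n X^n/n! = X/(1−e^{−X})`.  Then the homogeneous component of total
degree `m` of `F` vanishes: every coefficient of `F` on a monomial of total degree `m` is `0`. -/
theorem stmt_8 (m : ℕ) (hm : 1 ≤ m) (d : Fin m →₀ ℕ) (hd : (d.sum fun _ e => e) = m) :
    MvPowerSeries.coeff d
        ((∑ p : Fin m, substVar p (PowerSeries.mk fun n => bernoulli n / (n.factorial : ℚ))) *
          ∏ q : Fin m, substVar q (PowerSeries.mk fun n => bernoulli' n / (n.factorial : ℚ)))
      = 0 :=
  stmt_8_general m d hd
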